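/- arXiv:2603.23921 — 4 statements merged into one kernel-verified Lean document; each statement's English description precedes it below -/
import Mathlib

section
/- (Subsolution conditions: existence of parameters.) Let p : ℝ → ℝ be continuously differentiable on (0,∞) with p(ρ) > 0 and p'(ρ) > 0 for all ρ > 0, let P(ρ) = ρ ∫_{ρ*}^{ρ} p(r)/r² dr for some fixed ρ* > 0, and let ρ₀ > 0 and u₀ ≠ 0. Then there exist real numbers a, b with 0 < a < b, ρ₁ > 0 with ρ₂ := ρ₁ − (b/a)(ρ₁ − ρ₀) > 0, and m₁₁, q₁, q₂ ∈ ℝ such that the following hold: (E) b(q₁ + P(ρ₁) − p(ρ₁) − ½ρ₀u₀² − P(ρ₀)) ≤ a(q₁ + P(ρ₁) − p(ρ₁) − q₂ − P(ρ₂) + p(ρ₂)); (T1) (m₁₁² + b²(ρ₁ − ρ₀)²)/ρ₁ + 2(p(ρ₁) − q₁) < 0; (D1) (m₁₁²/ρ₁ + b²(ρ₁ − ρ₀) + p(ρ₀) + p(ρ₁) − 2q₁) · (b²(ρ₁ − ρ₀)²/ρ₁ − b²(ρ₁ − ρ₀) − p(ρ₀) + p(ρ₁)) > (−b(ρ₁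 − ρ₀)m₁₁/ρ₁ + b(ρ₀u₀ + m₁₁))²; (T2) p(ρ₂) − q₂ < 0; (D2) (b(b − a)(ρ₁ − ρ₀) + p(ρ₀) + p(ρ₂) − 2q₂) · (−b(b − a)(ρ₁ − ρ₀) − p(ρ₀) + p(ρ₂)) > ((b − a)m₁₁ + bρ₀u₀)². -/
/-
Choose `m₁₁ = -ρ₁ u₀`, which makes the right-hand side of (D1) vanish, and `q₁`, `q₂` just above
the thresholds forced by (D1) and (D2). With `a = b δ²`, `ρ₁ - ρ₀ = δ³` and `ρ₀ - ρ₂ ≈ δ`, all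
conditions but (E) hold for small `δ` once `b²` exceeds twice a local Lipschitz constant of `p`
at `ρ₀`. In (E) the gain `u₀² a ρ₂ / 2 ≈ b δ² ρ₀ u₀² / 2` coming from the kinetic energy of the
initial state beats every other term, each of size `O(b δ³)` by the monotonicity of `p` and the
local Lipschitz bounds on `p` and `P` at `ρ₀` (`P` is differentiable there by the fundamental
theorem of calculus).
-/

open Set Filter Topology Asymptotics

theorem strictMonoOn_of_deriv_pos_of_isOpen {f : ℝ → ℝ} {D : Set ℝ} (hD : Convex ℝ D)
    (hDo : IsOpen D) (hf' : ∀ x ∈ D, 0 < deriv f x) : StrictMonoOn f D :=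
  strictMonoOn_of_deriv_pos hD
    (fun x hx => (differentiableAt_of_deriv_ne_zero (hf' x hx).ne').continuousAt.continuousWithinAt)
    (by rwa [hDo.interior_eq])

theorem differentiableAt_mul_intervalIntegral {f : ℝ → ℝ} {s : Set ℝ} {c x : ℝ} (hs : IsOpen s)
    (hf : ContinuousOn f s) (hcx : uIcc c x ⊆ s) :
    DifferentiableAt ℝ (fun y => y * ∫ r in c..y, f r) x := by
  have hx : x ∈ s := hcx right_mem_uIcc
  exact differentiableAt_id.mul (intervalIntegral.integral_hasDerivAt_right
    ((hf.mono hcx).intervalIntegrable) (hf.stronglyMeasurableAtFilter hs x hx)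
    (hf.continuousAt (hs.mem_nhds hx))).differentiableAt

/-- (T1) is the second factor of (D1) minus `2η`, so both reduce to the negativity of that
factor. -/
theorem first_state_conditions {p : ℝ → ℝ} {b ρ₀ ρ₁ u₀ L m₁₁ q₁ η : ℝ} (hρ₀₁ : ρ₀ < ρ₁)
    (hρ₁ : ρ₁ ≤ 2 * ρ₀) (hp : |p ρ₁ - p ρ₀| ≤ L * |ρ₁ - ρ₀|) (hb : 2 * L < b ^ 2)
    (hm : m₁₁ = -(ρ₁ * u₀))
    (hη : 0 < η) (hq₁ : q₁ = (ρ₁ * u₀ ^ 2 + b ^ 2 * (ρ₁ - ρ₀) + p ρ₀ + p ρ₁) / 2 + η) :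
    (m₁₁ ^ 2 + b ^ 2 * (ρ₁ - ρ₀) ^ 2) / ρ₁ + 2 * (p ρ₁ - q₁) < 0 ∧
    (m₁₁ ^ 2 / ρ₁ + b ^ 2 * (ρ₁ - ρ₀) + p ρ₀ + p ρ₁ - 2 * q₁)
          * (b ^ 2 * (ρ₁ - ρ₀) ^ 2 / ρ₁ - b ^ 2 * (ρ₁ - ρ₀) - p ρ₀ + p ρ₁)
        > (-(b * (ρ₁ - ρ₀) * m₁₁) / ρ₁ + b * (ρ₀ * u₀ + m₁₁)) ^ 2 := by
  subst hm hq₁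
  have hρ₁pos : 0 < ρ₁ := by linarith
  rw [abs_of_pos (sub_pos.2 hρ₀₁)] at hp
  have hjump : b ^ 2 * (ρ₁ - ρ₀) ^ 2 / ρ₁ ≤ b ^ 2 * (ρ₁ - ρ₀) / 2 := by
    rw [div_le_iff₀ hρ₁pos]
    nlinarith [mul_nonneg (mul_nonneg (sq_nonneg b) (sub_nonneg.2 hρ₀₁.le)) (sub_nonneg.2 hρ₁)]
  have hκ : b ^ 2 * (ρ₁ - ρ₀) ^ 2 / ρ₁ - b ^ 2 * (ρ₁ - ρ₀) - p ρ₀ + p ρ₁ < 0 := by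
    nlinarith [le_abs_self (p ρ₁ - p ρ₀), mul_lt_mul_of_pos_right hb (sub_pos.2 hρ₀₁)]
  have hmom : (-(ρ₁ * u₀)) ^ 2 / ρ₁ = ρ₁ * u₀ ^ 2 := by field_simp
  have hrhs : -(b * (ρ₁ - ρ₀) * -(ρ₁ * u₀)) / ρ₁ + b * (ρ₀ * u₀ + -(ρ₁ * u₀)) = 0 := by
    field_simp; ring
  constructor
  · rw [add_div, hmom]; linarith
  · rw [hmom, hrhs, zero_pow two_ne_zero]
    exact mul_pos_of_neg_of_neg (by linarith) hκ

theorem second_state_conditions {p : ℝ → ℝ} (hp : MonotoneOn p (Ioi 0))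
    {a b ρ₀ ρ₁ ρ₂ u₀ m₁₁ q₂ η : ℝ} (ha : 0 < a) (hab : a < b) (hρ₀₁ : ρ₀ < ρ₁) (hρ₂ : 0 < ρ₂)
    (hfan : a * (ρ₁ - ρ₂) = b * (ρ₁ - ρ₀)) (hu₀ : u₀ ≠ 0) (hm : m₁₁ = -(ρ₁ * u₀))
    (hη : u₀ ^ 2 * a ^ 2 * ρ₀ ^ 2 ≤ η * (b * (b - a) * (ρ₁ - ρ₀)))
    (hq₂ : q₂ = (b * (b - a) * (ρ₁ - ρ₀) + p ρ₀ + p ρ₂) / 2 + η) :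
    p ρ₂ - q₂ < 0 ∧
    (b * (b - a) * (ρ₁ - ρ₀) + p ρ₀ + p ρ₂ - 2 * q₂) * (-(b * (b - a) * (ρ₁ - ρ₀)) - p ρ₀ + p ρ₂)
      > ((b - a) * m₁₁ + b * ρ₀ * u₀) ^ 2 := by
  subst hm hq₂
  have hgap : 0 < b * (b - a) * (ρ₁ - ρ₀) :=
    mul_pos (mul_pos (ha.trans hab) (sub_pos.2 hab)) (sub_pos.2 hρ₀₁)
  have hρ₂₀ : ρ₂ ≤ ρ₀ := by nlinarith
  have hp₂ : p ρ₂ ≤ p ρ₀ := hp hρ₂ (hρ₂.trans_le hρ₂₀) hρ₂₀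
  have hu₀a : 0 < u₀ ^ 2 * a ^ 2 * ρ₀ ^ 2 := by
    have := hρ₂.trans_le hρ₂₀
    positivity
  have hηpos : 0 < η := pos_of_mul_pos_left (hu₀a.trans_le hη) hgap.le
  have hrhs : (b - a) * -(ρ₁ * u₀) + b * ρ₀ * u₀ = u₀ * a * ρ₂ := by linear_combination u₀ * hfan
  rw [hrhs]
  constructor
  · linarith
  · nlinarith [mul_le_mul_of_nonneg_left hp₂ hηpos.le, mul_le_mul_of_nonneg_left
      (pow_le_pow_left₀ hρ₂.le hρ₂₀ 2) (by positivity : (0:ℝ) ≤ u₀ ^ 2 * a ^ 2)]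

theorem entropy_condition {p P : ℝ → ℝ} {a b ρ₀ ρ₁ ρ₂ u₀ L M q₁ q₂ η₁ η₂ : ℝ}
    (ha : 0 < a) (hab : a < b) (hρ₀₁ : ρ₀ ≤ ρ₁) (hfan : a * (ρ₁ - ρ₂) = b * (ρ₁ - ρ₀))
    (hL : 0 ≤ L) (hp₁ : p ρ₀ ≤ p ρ₁) (hp₂ : |p ρ₂ - p ρ₀| ≤ L * |ρ₂ - ρ₀|)
    (hP₁ : |P ρ₁ - P ρ₀| ≤ M * |ρ₁ - ρ₀|) (hP₂ : |P ρ₂ - P ρ₀| ≤ M * |ρ₂ - ρ₀|) (hη₁ : 0 ≤ η₁)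
    (hq₁ : q₁ = (ρ₁ * u₀ ^ 2 + b ^ 2 * (ρ₁ - ρ₀) + p ρ₀ + p ρ₁) / 2 + η₁)
    (hq₂ : q₂ = (b * (b - a) * (ρ₁ - ρ₀) + p ρ₀ + p ρ₂) / 2 + η₂)
    (hsmall : b * (ρ₁ - ρ₀) * (b ^ 2 + L + 4 * M) + 2 * (b * η₁ + a * η₂) ≤ u₀ ^ 2 * a * ρ₂) :
    b * (q₁ + P ρ₁ - p ρ₁ - ρ₀ * u₀ ^ 2 / 2 - P ρ₀)
      ≤ a * (q₁ + P ρ₁ - p ρ₁ - q₂ - P ρ₂ + p ρ₂) := by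
  have hb : 0 < b := ha.trans hab
  have hε : 0 ≤ ρ₁ - ρ₀ := sub_nonneg.2 hρ₀₁
  have hgap : a * (ρ₀ - ρ₂) = (b - a) * (ρ₁ - ρ₀) := by linear_combination hfan
  have hρ₂₀ : 0 ≤ ρ₀ - ρ₂ :=
    nonneg_of_mul_nonneg_right (hgap ▸ mul_nonneg (sub_nonneg.2 hab.le) hε) ha
  rw [abs_of_nonneg hε] at hP₁
  rw [abs_sub_comm ρ₂, abs_of_nonneg hρ₂₀] at hp₂ hP₂
  rw [abs_sub_comm] at hp₂
  have hslack : a * (q₁ + P ρ₁ - p ρ₁ - q₂ - P ρ₂ + p ρ₂)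
      - b * (q₁ + P ρ₁ - p ρ₁ - ρ₀ * u₀ ^ 2 / 2 - P ρ₀)
      = u₀ ^ 2 * a * ρ₂ / 2 - b * (b ^ 2 - a ^ 2) * (ρ₁ - ρ₀) / 2 + (b - a) * (p ρ₁ - p ρ₀) / 2
        - (b - a) * η₁ - a * (p ρ₀ - p ρ₂) / 2 - a * η₂ + b * (P ρ₀ - P ρ₁)
        + a * (P ρ₁ - P ρ₂) := by
    subst hq₁ hq₂; linear_combination (u₀ ^ 2 / 2) * hfan
  have hcubic : b * (b ^ 2 - a ^ 2) * (ρ₁ - ρ₀) ≤ b * b ^ 2 * (ρ₁ - ρ₀) := by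
    have := mul_nonneg (mul_nonneg hb.le (sq_nonneg a)) hε
    nlinarith
  have hp₁' : 0 ≤ (b - a) * (p ρ₁ - p ρ₀) := mul_nonneg (sub_nonneg.2 hab.le) (sub_nonneg.2 hp₁)
  have hη₁' : (b - a) * η₁ ≤ b * η₁ := by nlinarith
  -- `hgap` turns increments over `[ρ₂, ρ₀]`, weighted by `a`, into multiples of `b (ρ₁ - ρ₀)`.
  have hp₂' : a * (p ρ₀ - p ρ₂) ≤ L * b * (ρ₁ - ρ₀) := by
    nlinarith [mul_le_mul_of_nonneg_left (le_abs_self (p ρ₀ - p ρ₂)) ha.le,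
      mul_le_mul_of_nonneg_left hp₂ ha.le, mul_nonneg (mul_nonneg hL ha.le) hε]
  have hP₁' : -(b * M * (ρ₁ - ρ₀)) ≤ b * (P ρ₀ - P ρ₁) := by
    nlinarith [mul_le_mul_of_nonneg_left (abs_le.1 hP₁).2 hb.le]
  have hP₂' : -(b * M * (ρ₁ - ρ₀)) ≤ a * (P ρ₁ - P ρ₂) := by
    have h₁ := mul_le_mul_of_nonneg_left (abs_le.1 hP₁).1 ha.le
    have h₂ := mul_le_mul_of_nonneg_left (abs_le.1 hP₂).2 ha.le
    linear_combination h₁ + h₂ + M * hgap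
  linarith

theorem eventually_abs_sub_le_at_fan_densities {f : ℝ → ℝ} {x₀ C : ℝ}
    (hf : IsBigOWith C (𝓝 x₀) (f · - f x₀) (· - x₀)) :
    ∀ᶠ δ in 𝓝[>] (0 : ℝ), |f (x₀ + δ ^ 3) - f x₀| ≤ C * |x₀ + δ ^ 3 - x₀| ∧
      |f (x₀ + δ ^ 3 - δ) - f x₀| ≤ C * |x₀ + δ ^ 3 - δ - x₀| := by
  have h₁ : Tendsto (fun δ : ℝ => x₀ + δ ^ 3) (𝓝 0) (𝓝 x₀) :=
    (by fun_prop : Continuous fun δ : ℝ => x₀ + δ ^ 3).tendsto' 0 x₀ (by simp)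
  have h₂ : Tendsto (fun δ : ℝ => x₀ + δ ^ 3 - δ) (𝓝 0) (𝓝 x₀) :=
    (by fun_prop : Continuous fun δ : ℝ => x₀ + δ ^ 3 - δ).tendsto' 0 x₀ (by simp)
  exact nhdsWithin_le_nhds ((h₁.eventually hf.bound).and (h₂.eventually hf.bound))

/-- The inequality with the constant `b² + L + 4M + 2 + 4u₀²ρ₀²` is the hypothesis `hsmall` of
`entropy_condition` for `a = b δ²`, `ρ₁ = ρ₀ + δ³`, `η₁ = δ³`, `η₂ = 2u₀²ρ₀²δ`, divided by
`b δ²`. -/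
theorem exists_fan_scale {p P : ℝ → ℝ} {ρ₀ u₀ L M : ℝ}
    (hp : IsBigOWith L (𝓝 ρ₀) (p · - p ρ₀) (· - ρ₀))
    (hP : IsBigOWith M (𝓝 ρ₀) (P · - P ρ₀) (· - ρ₀))
    (hρ₀ : 0 < ρ₀) (hu₀ : u₀ ≠ 0) (b : ℝ) :
    ∃ δ, 0 < δ ∧ δ < 1 / 2 ∧
      δ * (b ^ 2 + L + 4 * M + 2 + 4 * u₀ ^ 2 * ρ₀ ^ 2) < u₀ ^ 2 * (ρ₀ + δ ^ 3 - δ) ∧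
      |p (ρ₀ + δ ^ 3) - p ρ₀| ≤ L * |ρ₀ + δ ^ 3 - ρ₀| ∧
      |p (ρ₀ + δ ^ 3 - δ) - p ρ₀| ≤ L * |ρ₀ + δ ^ 3 - δ - ρ₀| ∧
      |P (ρ₀ + δ ^ 3) - P ρ₀| ≤ M * |ρ₀ + δ ^ 3 - ρ₀| ∧
      |P (ρ₀ + δ ^ 3 - δ) - P ρ₀| ≤ M * |ρ₀ + δ ^ 3 - δ - ρ₀| := by
  have hsmall : ∀ᶠ δ in 𝓝 (0 : ℝ),
      δ * (b ^ 2 + L + 4 * M + 2 + 4 * u₀ ^ 2 * ρ₀ ^ 2) < u₀ ^ 2 * (ρ₀ + δ ^ 3 - δ) :=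
    ContinuousAt.eventually_lt (by fun_prop) (by fun_prop) (by norm_num; positivity)
  obtain ⟨δ, ⟨hδ, hδ₁⟩, hδK, ⟨hp₁, hp₂⟩, hP₁, hP₂⟩ :=
    (Eventually.and (Ioo_mem_nhdsGT one_half_pos) ((hsmall.filter_mono nhdsWithin_le_nhds).and
      ((eventually_abs_sub_le_at_fan_densities hp).and
        (eventually_abs_sub_le_at_fan_densities hP)))).exists
  exact ⟨δ, hδ, hδ₁, hδK, hp₁, hp₂, hP₁, hP₂⟩

theorem exists_subsolution_parameters_of_differentiableAt {p P : ℝ → ℝ} {ρ₀ u₀ : ℝ}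
    (hmono : MonotoneOn p (Ioi 0)) (hp : DifferentiableAt ℝ p ρ₀) (hP : DifferentiableAt ℝ P ρ₀)
    (hρ₀ : 0 < ρ₀) (hu₀ : u₀ ≠ 0) :
    ∃ a b ρ₁ m₁₁ q₁ q₂ : ℝ,
      0 < a ∧ a < b ∧ 0 < ρ₁ ∧
      0 < ρ₁ - (b / a) * (ρ₁ - ρ₀) ∧
      (b * (q₁ + P ρ₁ - p ρ₁ - ρ₀ * u₀ ^ 2 / 2 - P ρ₀)
        ≤ a * (q₁ + P ρ₁ - p ρ₁ - q₂ - P (ρ₁ - (b / a) * (ρ₁ - ρ₀))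
            + p (ρ₁ - (b / a) * (ρ₁ - ρ₀)))) ∧
      ((m₁₁ ^ 2 + b ^ 2 * (ρ₁ - ρ₀) ^ 2) / ρ₁ + 2 * (p ρ₁ - q₁) < 0) ∧
      ((m₁₁ ^ 2 / ρ₁ + b ^ 2 * (ρ₁ - ρ₀) + p ρ₀ + p ρ₁ - 2 * q₁)
          * (b ^ 2 * (ρ₁ - ρ₀) ^ 2 / ρ₁ - b ^ 2 * (ρ₁ - ρ₀) - p ρ₀ + p ρ₁)
        > (-(b * (ρ₁ - ρ₀) * m₁₁) / ρ₁ + b * (ρ₀ * u₀ + m₁₁)) ^ 2) ∧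
      (p (ρ₁ - (b / a) * (ρ₁ - ρ₀)) - q₂ < 0) ∧
      ((b * (b - a) * (ρ₁ - ρ₀) + p ρ₀ + p (ρ₁ - (b / a) * (ρ₁ - ρ₀)) - 2 * q₂)
          * (-(b * (b - a) * (ρ₁ - ρ₀)) - p ρ₀ + p (ρ₁ - (b / a) * (ρ₁ - ρ₀)))
        > ((b - a) * m₁₁ + b * ρ₀ * u₀) ^ 2) := by
  obtain ⟨L, hL, hpL⟩ := hp.isBigO_sub.exists_pos
  obtain ⟨M, hM, hPM⟩ := hP.isBigO_sub.exists_pos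
  set b := 2 * L + 1 with hb
  obtain ⟨δ, hδ, hδ₁, hδK, hp₁, hp₂, hP₁, hP₂⟩ := exists_fan_scale hpL hPM hρ₀ hu₀ b
  have hb0 : 0 < b := by linarith
  have hδ2 : δ ^ 2 < 1 / 4 := by nlinarith
  have hδ3 : 0 < δ ^ 3 := by positivity
  have hδ3_le : 2 * δ ^ 3 ≤ δ := by nlinarith
  have hρ₂pos : 0 < ρ₀ + δ ^ 3 - δ := by
    have : 0 ≤ δ * (b ^ 2 + L + 4 * M + 2 + 4 * u₀ ^ 2 * ρ₀ ^ 2) := by positivity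
    exact pos_of_mul_pos_right (this.trans_lt hδK) (sq_nonneg u₀)
  have ha : 0 < b * δ ^ 2 := by positivity
  have hab : b * δ ^ 2 < b := by nlinarith
  have hρ₂ : ρ₀ + δ ^ 3 - b / (b * δ ^ 2) * (ρ₀ + δ ^ 3 - ρ₀) = ρ₀ + δ ^ 3 - δ := by
    field_simp; ring
  have hfan : b * δ ^ 2 * (ρ₀ + δ ^ 3 - (ρ₀ + δ ^ 3 - δ)) = b * (ρ₀ + δ ^ 3 - ρ₀) := by ring
  have hη : u₀ ^ 2 * (b * δ ^ 2) ^ 2 * ρ₀ ^ 2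
      ≤ 2 * u₀ ^ 2 * ρ₀ ^ 2 * δ * (b * (b - b * δ ^ 2) * (ρ₀ + δ ^ 3 - ρ₀)) := by
    nlinarith [mul_nonneg (by positivity : (0 : ℝ) ≤ u₀ ^ 2 * ρ₀ ^ 2 * b ^ 2 * δ ^ 4)
      (by nlinarith : (0 : ℝ) ≤ 1 - 2 * δ ^ 2)]
  have hsmall : b * (ρ₀ + δ ^ 3 - ρ₀) * (b ^ 2 + L + 4 * M)
      + 2 * (b * δ ^ 3 + b * δ ^ 2 * (2 * u₀ ^ 2 * ρ₀ ^ 2 * δ))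
      ≤ u₀ ^ 2 * (b * δ ^ 2) * (ρ₀ + δ ^ 3 - δ) := by
    nlinarith [mul_le_mul_of_nonneg_left hδK.le ha.le]
  refine ⟨b * δ ^ 2, b, ρ₀ + δ ^ 3, -((ρ₀ + δ ^ 3) * u₀),
    ((ρ₀ + δ ^ 3) * u₀ ^ 2 + b ^ 2 * (ρ₀ + δ ^ 3 - ρ₀) + p ρ₀ + p (ρ₀ + δ ^ 3)) / 2 + δ ^ 3,
    (b * (b - b * δ ^ 2) * (ρ₀ + δ ^ 3 - ρ₀) + p ρ₀ + p (ρ₀ + δ ^ 3 - δ)) / 2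
      + 2 * u₀ ^ 2 * ρ₀ ^ 2 * δ, ?_⟩
  rw [hρ₂]
  obtain ⟨hT1, hD1⟩ := first_state_conditions (b := b) (u₀ := u₀) (by linarith) (by linarith)
    hp₁ (by nlinarith) rfl hδ3 rfl
  obtain ⟨hT2, hD2⟩ :=
    second_state_conditions hmono ha hab (by linarith) hρ₂pos hfan hu₀ rfl hη rfl
  have hp₀₁ : p ρ₀ ≤ p (ρ₀ + δ ^ 3) := hmono hρ₀ (by simp only [mem_Ioi]; positivity) (by linarith)
  exact ⟨ha, hab, by positivity, hρ₂pos, entropy_condition ha hab (by linarith) hfan hL.le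
    hp₀₁ hp₂ hP₁ hP₂ hδ3.le rfl rfl hsmall, hT1, hD1, hT2, hD2⟩

theorem subsolution_parameters_exist_general
    (p : ℝ → ℝ)
    (hp' : ∀ ρ : ℝ, 0 < ρ → 0 < deriv p ρ)
    (ρstar : ℝ) (hρstar : 0 < ρstar)
    (P : ℝ → ℝ) (hP : ∀ ρ : ℝ, P ρ = ρ * ∫ r in ρstar..ρ, p r / r ^ 2)
    (ρ₀ u₀ : ℝ) (hρ₀ : 0 < ρ₀) (hu₀ : u₀ ≠ 0) :
    ∃ a b ρ₁ m₁₁ q₁ q₂ : ℝ,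
      0 < a ∧ a < b ∧ 0 < ρ₁ ∧
      0 < ρ₁ - (b / a) * (ρ₁ - ρ₀) ∧
      -- (E) reduced entropy condition
      (b * (q₁ + P ρ₁ - p ρ₁ - ρ₀ * u₀ ^ 2 / 2 - P ρ₀)
        ≤ a * (q₁ + P ρ₁ - p ρ₁ - q₂ - P (ρ₁ - (b / a) * (ρ₁ - ρ₀))
            + p (ρ₁ - (b / a) * (ρ₁ - ρ₀)))) ∧
      -- (T1)
      ((m₁₁ ^ 2 + b ^ 2 * (ρ₁ - ρ₀) ^ 2) / ρ₁ + 2 * (p ρ₁ - q₁) < 0) ∧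
      -- (D1)
      ((m₁₁ ^ 2 / ρ₁ + b ^ 2 * (ρ₁ - ρ₀) + p ρ₀ + p ρ₁ - 2 * q₁)
          * (b ^ 2 * (ρ₁ - ρ₀) ^ 2 / ρ₁ - b ^ 2 * (ρ₁ - ρ₀) - p ρ₀ + p ρ₁)
        > (-(b * (ρ₁ - ρ₀) * m₁₁) / ρ₁ + b * (ρ₀ * u₀ + m₁₁)) ^ 2) ∧
      -- (T2)
      (p (ρ₁ - (b / a) * (ρ₁ - ρ₀)) - q₂ < 0) ∧
      -- (D2)
      ((b * (b - a) * (ρ₁ - ρ₀) + p ρ₀ + p (ρ₁ - (b / a) * (ρ₁ - ρ₀)) - 2 * q₂)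
          * (-(b * (b - a) * (ρ₁ - ρ₀)) - p ρ₀ + p (ρ₁ - (b / a) * (ρ₁ - ρ₀)))
        > ((b - a) * m₁₁ + b * ρ₀ * u₀) ^ 2) := by
  -- `deriv` is `0` at points of non-differentiability
  have hpd : ∀ ρ, 0 < ρ → DifferentiableAt ℝ p ρ := fun ρ hρ =>
    differentiableAt_of_deriv_ne_zero (hp' ρ hρ).ne'
  have hPd : DifferentiableAt ℝ P ρ₀ := by
    rw [funext hP]
    refine differentiableAt_mul_intervalIntegral isOpen_Ioi (fun x hx => ?_)
      (ordConnected_Ioi.uIcc_subset hρstar hρ₀)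
    exact ((hpd x hx).continuousAt.div (continuous_pow 2).continuousAt
      (pow_pos hx 2).ne').continuousWithinAt
  exact exists_subsolution_parameters_of_differentiableAt
    (strictMonoOn_of_deriv_pos_of_isOpen (convex_Ioi 0) isOpen_Ioi hp').monotoneOn
    (hpd ρ₀ hρ₀) hPd hρ₀ hu₀

/-- **Subsolution conditions: existence of parameters** (Lemma 3.5).
For any strictly increasing, positive `C¹` pressure law on `(0,∞)`, any `ρ₀ > 0` and `u₀ ≠ 0`,
there exist parameters `0 < a < b`, `ρ₁ > 0` with `ρ₂ := ρ₁ - (b/a)(ρ₁ - ρ₀) > 0`,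
and `m₁₁, q₁, q₂ ∈ ℝ` satisfying the reduced entropy condition (E) and the
subsolution conditions (T1), (D1), (T2), (D2).
Here `P(ρ) = ρ ∫_{ρ*}^ρ p(r)/r² dr`. -/
theorem subsolution_parameters_exist
    (p : ℝ → ℝ) (hp : ContDiffOn ℝ 1 p (Set.Ioi 0))
    (hppos : ∀ ρ : ℝ, 0 < ρ → 0 < p ρ) (hp' : ∀ ρ : ℝ, 0 < ρ → 0 < deriv p ρ)
    (ρstar : ℝ) (hρstar : 0 < ρstar)
    (P : ℝ → ℝ) (hP : ∀ ρ : ℝ, P ρ = ρ * ∫ r in ρstar..ρ, p r / r ^ 2)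
    (ρ₀ u₀ : ℝ) (hρ₀ : 0 < ρ₀) (hu₀ : u₀ ≠ 0) :
    ∃ a b ρ₁ m₁₁ q₁ q₂ : ℝ,
      0 < a ∧ a < b ∧ 0 < ρ₁ ∧
      0 < ρ₁ - (b / a) * (ρ₁ - ρ₀) ∧
      -- (E) reduced entropy condition
      (b * (q₁ + P ρ₁ - p ρ₁ - ρ₀ * u₀ ^ 2 / 2 - P ρ₀)
        ≤ a * (q₁ + P ρ₁ - p ρ₁ - q₂ - P (ρ₁ - (b / a) * (ρ₁ - ρ₀))
            + p (ρ₁ - (b / a) * (ρ₁ - ρ₀)))) ∧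
      -- (T1)
      ((m₁₁ ^ 2 + b ^ 2 * (ρ₁ - ρ₀) ^ 2) / ρ₁ + 2 * (p ρ₁ - q₁) < 0) ∧
      -- (D1)
      ((m₁₁ ^ 2 / ρ₁ + b ^ 2 * (ρ₁ - ρ₀) + p ρ₀ + p ρ₁ - 2 * q₁)
          * (b ^ 2 * (ρ₁ - ρ₀) ^ 2 / ρ₁ - b ^ 2 * (ρ₁ - ρ₀) - p ρ₀ + p ρ₁)
        > (-(b * (ρ₁ - ρ₀) * m₁₁) / ρ₁ + b * (ρ₀ * u₀ + m₁₁)) ^ 2) ∧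
      -- (T2)
      (p (ρ₁ - (b / a) * (ρ₁ - ρ₀)) - q₂ < 0) ∧
      -- (D2)
      ((b * (b - a) * (ρ₁ - ρ₀) + p ρ₀ + p (ρ₁ - (b / a) * (ρ₁ - ρ₀)) - 2 * q₂)
          * (-(b * (b - a) * (ρ₁ - ρ₀)) - p ρ₀ + p (ρ₁ - (b / a) * (ρ₁ - ρ₀)))
        > ((b - a) * m₁₁ + b * ρ₀ * u₀) ^ 2) :=
  subsolution_parameters_exist_general p hp' ρstar hρstar P hP ρ₀ u₀ hρ₀ hu₀
end

section
/- (Verification of the entropy condition.) Let p : ℝ → ℝ be continuously differentiable on (0,∞) with p(ρ) > 0 and p'(ρ) > 0 for all ρ > 0, let P(ρ) = ρ ∫_{ρ*}^{ρ} p(r)/r² dr for some fixed ρ* > 0, let ρ₀ > 0, u₀ ≠ 0, and set b := √(p'(ρ₀) + 1). Let ε ∈ (0, ρ₀) satisfy ε(u₀² + 2P'(ρ₀) + 3) + 2P(ρ₀ − ε) − p(ρ₀ − ε) − 2P(ρ₀) + p(ρ₀) < ½ρ₀u₀², and let a ∈ (0, b) satisfy, with δ := aε/(b − a), (2P(ρ₀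 + δ) − 2P(ρ₀))/δ − (p(ρ₀ + δ) − p(ρ₀))/δ < 2P'(ρ₀) − p'(ρ₀) + 1. Define ρ₁ := ρ₀ + aε/(b − a), ρ₂ := ρ₀ − ε, q₁ := ½(ρ₁u₀² + (ρ₁ − ρ₀)(b² + 1) + p(ρ₀) + p(ρ₁)), and q₂ := ½(p(ρ₀) + p(ρ₀ − ε) + ½ρ₀u₀²). Then b(q₁ + P(ρ₁) − p(ρ₁) − ½ρ₀u₀² − P(ρ₀)) < a(q₁ + P(ρ₁) − p(ρ₁) − q₂ − P(ρ₂) + p(ρ₂)). -/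
/-!
Write `X₁ := q₁ + P ρ₁ - p ρ₁`, `X₂ := q₂ + P ρ₂ - p ρ₂`, `M := ρ₀u₀² + 2P(ρ₀)` and
`K := u₀² + 2P'(ρ₀) + 3`. Using `b² = p'(ρ₀) + 1`, the condition on `a` says `2X₁ < M + δK`,
and the smallness condition on `ε` says `2X₂ + εK < M`. Since `(b - a)δ = aε`, the combination
`(b - a)·(first) + a·(second)` cancels the `K` terms and is exactly the entropy inequality.
-/

theorem entropy_combination_lt {a b δ ε K M X₁ X₂ : ℝ} (ha : 0 < a) (hab : a < b)
    (hδ : (b - a) * δ = a * ε) (h₁ : 2 * X₁ < M + δ * K) (h₂ : 2 * X₂ + ε * K < M) :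
    b * (X₁ - M / 2) < a * (X₁ - X₂) := by
  have h₁' := mul_lt_mul_of_pos_left h₁ (sub_pos.mpr hab)
  have h₂' := mul_lt_mul_of_pos_left h₂ ha
  have hK : (b - a) * (δ * K) = a * (ε * K) := by rw [← mul_assoc, hδ, mul_assoc]
  linarith

theorem entropy_condition_verified_general
    (p : ℝ → ℝ)
    (P : ℝ → ℝ)
    (ρ₀ u₀ : ℝ)
    (b : ℝ) (hb : b = Real.sqrt (deriv p ρ₀ + 1))
    (ε : ℝ) (hε : 0 < ε)
    (hεsmall : ε * (u₀ ^ 2 + 2 * deriv P ρ₀ + 3) + 2 * P (ρ₀ - ε) - p (ρ₀ - ε)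
        - 2 * P ρ₀ + p ρ₀ < ρ₀ * u₀ ^ 2 / 2)
    (a : ℝ) (ha : 0 < a) (hab : a < b)
    (ha1 : (2 * P (ρ₀ + a * ε / (b - a)) - 2 * P ρ₀) / (a * ε / (b - a))
          - (p (ρ₀ + a * ε / (b - a)) - p ρ₀) / (a * ε / (b - a))
        < 2 * deriv P ρ₀ - deriv p ρ₀ + 1)
    (ρ₁ : ℝ) (hρ₁ : ρ₁ = ρ₀ + a * ε / (b - a))
    (ρ₂ : ℝ) (hρ₂ : ρ₂ = ρ₀ - ε)
    (q₁ : ℝ) (hq₁ : q₁ = (ρ₁ * u₀ ^ 2 + (ρ₁ - ρ₀) * (b ^ 2 + 1) + p ρ₀ + p ρ₁) / 2)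
    (q₂ : ℝ) (hq₂ : q₂ = (p ρ₀ + p (ρ₀ - ε) + ρ₀ * u₀ ^ 2 / 2) / 2) :
    b * (q₁ + P ρ₁ - p ρ₁ - ρ₀ * u₀ ^ 2 / 2 - P ρ₀)
      < a * (q₁ + P ρ₁ - p ρ₁ - q₂ - P ρ₂ + p ρ₂) := by
  have hba : 0 < b - a := sub_pos.mpr hab
  set δ := a * ε / (b - a) with hδ
  have hδ_pos : 0 < δ := by positivity
  have hbδ : (b - a) * δ = a * ε := by rw [hδ]; field_simp
  have hb_sq : b ^ 2 = deriv p ρ₀ + 1 := by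
    rw [hb, Real.sq_sqrt (Real.sqrt_pos.mp (hb ▸ ha.trans hab)).le]
  have hquot : 2 * P ρ₁ - 2 * P ρ₀ - (p ρ₁ - p ρ₀) < δ * (2 * deriv P ρ₀ - deriv p ρ₀ + 1) := by
    rw [div_sub_div_same, div_lt_iff₀ hδ_pos] at ha1
    rw [hρ₁]
    linarith
  have hρ₁_sub : ρ₁ - ρ₀ = δ := by rw [hρ₁]; ring
  have hleft : 2 * (q₁ + P ρ₁ - p ρ₁)
      < ρ₀ * u₀ ^ 2 + 2 * P ρ₀ + δ * (u₀ ^ 2 + 2 * deriv P ρ₀ + 3) := by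
    rw [hq₁, hρ₁_sub, hb_sq]
    linear_combination hquot + u₀ ^ 2 * hρ₁_sub
  have hright : 2 * (q₂ + P ρ₂ - p ρ₂) + ε * (u₀ ^ 2 + 2 * deriv P ρ₀ + 3)
      < ρ₀ * u₀ ^ 2 + 2 * P ρ₀ := by
    rw [hq₂, hρ₂]
    linarith
  have hentropy := entropy_combination_lt ha hab hbδ hleft hright
  linarith

/-- **Verification of the entropy condition** (proof of Lemma 3.5).
With `b := √(p'(ρ₀) + 1)`, an `ε ∈ (0, ρ₀)` satisfying the smallness condition,
an `a ∈ (0, b)` satisfying (a1), and the explicit choices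
`ρ₁ := ρ₀ + aε/(b-a)`, `ρ₂ := ρ₀ - ε`,
`q₁ := ½(ρ₁u₀² + (ρ₁-ρ₀)(b²+1) + p(ρ₀) + p(ρ₁))`,
`q₂ := ½(p(ρ₀) + p(ρ₀-ε) + ½ρ₀u₀²)`,
the reduced entropy condition holds with strict inequality. -/
theorem entropy_condition_verified
    (p : ℝ → ℝ) (hp : ContDiffOn ℝ 1 p (Set.Ioi 0))
    (hppos : ∀ ρ : ℝ, 0 < ρ → 0 < p ρ) (hp' : ∀ ρ : ℝ, 0 < ρ → 0 < deriv p ρ)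
    (ρstar : ℝ) (hρstar : 0 < ρstar)
    (P : ℝ → ℝ) (hP : ∀ ρ : ℝ, P ρ = ρ * ∫ r in ρstar..ρ, p r / r ^ 2)
    (ρ₀ u₀ : ℝ) (hρ₀ : 0 < ρ₀) (hu₀ : u₀ ≠ 0)
    (b : ℝ) (hb : b = Real.sqrt (deriv p ρ₀ + 1))
    (ε : ℝ) (hε : 0 < ε) (hερ₀ : ε < ρ₀)
    (hεsmall : ε * (u₀ ^ 2 + 2 * deriv P ρ₀ + 3) + 2 * P (ρ₀ - ε) - p (ρ₀ - ε)
        - 2 * P ρ₀ + p ρ₀ < ρ₀ * u₀ ^ 2 / 2)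
    (a : ℝ) (ha : 0 < a) (hab : a < b)
    (ha1 : (2 * P (ρ₀ + a * ε / (b - a)) - 2 * P ρ₀) / (a * ε / (b - a))
          - (p (ρ₀ + a * ε / (b - a)) - p ρ₀) / (a * ε / (b - a))
        < 2 * deriv P ρ₀ - deriv p ρ₀ + 1)
    (ρ₁ : ℝ) (hρ₁ : ρ₁ = ρ₀ + a * ε / (b - a))
    (ρ₂ : ℝ) (hρ₂ : ρ₂ = ρ₀ - ε)
    (q₁ : ℝ) (hq₁ : q₁ = (ρ₁ * u₀ ^ 2 + (ρ₁ - ρ₀) * (b ^ 2 + 1) + p ρ₀ + p ρ₁) / 2)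
    (q₂ : ℝ) (hq₂ : q₂ = (p ρ₀ + p (ρ₀ - ε) + ρ₀ * u₀ ^ 2 / 2) / 2) :
    b * (q₁ + P ρ₁ - p ρ₁ - ρ₀ * u₀ ^ 2 / 2 - P ρ₀)
      < a * (q₁ + P ρ₁ - p ρ₁ - q₂ - P ρ₂ + p ρ₂) :=
  entropy_condition_verified_general p P ρ₀ u₀ b hb ε hε hεsmall a ha hab ha1 ρ₁ hρ₁ ρ₂ hρ₂ q₁ hq₁
    q₂ hq₂
end

section
/- (Verification of the subsolution conditions in the outer intermediate regions.) Let p : ℝ → ℝ be continuously differentiable on (0,∞) with p(ρ) > 0 and p'(ρ) > 0 for all ρ > 0, let ρ₀ > 0, u₀ ≠ 0, set b := √(p'(ρ₀) + 1), fix ε ∈ (0, ρ₀), and let a ∈ (0, b) satisfy, with δ := aε/(b − a), ((p(ρ₀ + δ) − p(ρ₀))/δ) · (1 + δ/ρ₀) < p'(ρ₀) + 1. Define ρ₁ := ρ₀ + aε/(b − a) and q₁ := ½(ρ₁u₀² + (ρ₁ − ρ₀)(b² + 1) + p(ρ₀) + p(ρ₁)). Then: (i) ρ₁u₀² + b²(ρ₁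 − ρ₀) + p(ρ₀) + p(ρ₁) − 2q₁ < 0; (ii) −b²(ρ₁ − ρ₀)(ρ₀/ρ₁) − p(ρ₀) + p(ρ₁) < 0; and consequently (iii) ρ₁u₀² + b²(ρ₁ − ρ₀)²/ρ₁ + 2(p(ρ₁) − q₁) < 0 and (iv) (ρ₁u₀² + b²(ρ₁ − ρ₀) + p(ρ₀) + p(ρ₁) − 2q₁) · (−b²(ρ₁ − ρ₀)(ρ₀/ρ₁) − p(ρ₀) + p(ρ₁)) > 0. -/
/-
Both factors are elementary in `δ := ρ₁ - ρ₀ > 0`: by the choice of `q₁` the first one equals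
`-δ`, and multiplying (a2) by `δ ρ₀ / ρ₁` turns it into the negativity of the second one, since
`1 + δ / ρ₀ = ρ₁ / ρ₀` and `b² = p'(ρ₀) + 1`. The trace expression (iii) is the sum of the two
factors, and the determinant (iv) is their product.
-/

theorem first_factor_eq_neg (u b ρ₀ ρ₁ P₀ P₁ : ℝ) :
    ρ₁ * u ^ 2 + b ^ 2 * (ρ₁ - ρ₀) + P₀ + P₁
        - 2 * ((ρ₁ * u ^ 2 + (ρ₁ - ρ₀) * (b ^ 2 + 1) + P₀ + P₁) / 2) = -(ρ₁ - ρ₀) := by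
  ring

theorem second_factor_neg_of_slope_lt {ρ₀ ρ₁ P₀ P₁ c : ℝ} (hρ₀ : 0 < ρ₀) (hρ₀₁ : ρ₀ < ρ₁)
    (hslope : (P₁ - P₀) / (ρ₁ - ρ₀) * (1 + (ρ₁ - ρ₀) / ρ₀) < c) :
    -(c * (ρ₁ - ρ₀)) * (ρ₀ / ρ₁) - P₀ + P₁ < 0 := by
  have hδ : 0 < ρ₁ - ρ₀ := sub_pos.mpr hρ₀₁
  have hρ₁ : 0 < ρ₁ := hρ₀.trans hρ₀₁
  have hfactor : 1 + (ρ₁ - ρ₀) / ρ₀ = ρ₁ / ρ₀ := by field_simp; ring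
  rw [hfactor, div_mul_div_comm, div_lt_iff₀ (by positivity)] at hslope
  have hcleared : (P₁ - P₀) * ρ₁ < c * (ρ₁ - ρ₀) * ρ₀ := by linarith
  rw [show -(c * (ρ₁ - ρ₀)) * (ρ₀ / ρ₁) - P₀ + P₁
      = ((P₁ - P₀) * ρ₁ - c * (ρ₁ - ρ₀) * ρ₀) / ρ₁ by field_simp; ring]
  exact div_neg_of_neg_of_pos (by linarith) hρ₁

theorem trace_eq_add_factors (u b ρ₀ ρ₁ P₀ P₁ q : ℝ) (hρ₁ : ρ₁ ≠ 0) :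
    ρ₁ * u ^ 2 + b ^ 2 * (ρ₁ - ρ₀) ^ 2 / ρ₁ + 2 * (P₁ - q)
      = (ρ₁ * u ^ 2 + b ^ 2 * (ρ₁ - ρ₀) + P₀ + P₁ - 2 * q)
        + (-(b ^ 2 * (ρ₁ - ρ₀)) * (ρ₀ / ρ₁) - P₀ + P₁) := by
  field_simp
  ring

theorem outer_subsolution_conditions_verified_general
    (p : ℝ → ℝ)
    (ρ₀ u₀ : ℝ) (hρ₀ : 0 < ρ₀)
    (b : ℝ) (hb : b = Real.sqrt (deriv p ρ₀ + 1))
    (ε : ℝ) (hε : 0 < ε)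
    (a : ℝ) (ha : 0 < a) (hab : a < b)
    (ha2 : ((p (ρ₀ + a * ε / (b - a)) - p ρ₀) / (a * ε / (b - a)))
          * (1 + (a * ε / (b - a)) / ρ₀)
        < deriv p ρ₀ + 1)
    (ρ₁ : ℝ) (hρ₁ : ρ₁ = ρ₀ + a * ε / (b - a))
    (q₁ : ℝ) (hq₁ : q₁ = (ρ₁ * u₀ ^ 2 + (ρ₁ - ρ₀) * (b ^ 2 + 1) + p ρ₀ + p ρ₁) / 2) :
    -- (i)
    (ρ₁ * u₀ ^ 2 + b ^ 2 * (ρ₁ - ρ₀) + p ρ₀ + p ρ₁ - 2 * q₁ < 0) ∧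
    -- (ii)
    (-(b ^ 2 * (ρ₁ - ρ₀)) * (ρ₀ / ρ₁) - p ρ₀ + p ρ₁ < 0) ∧
    -- (iii)
    (ρ₁ * u₀ ^ 2 + b ^ 2 * (ρ₁ - ρ₀) ^ 2 / ρ₁ + 2 * (p ρ₁ - q₁) < 0) ∧
    -- (iv)
    ((ρ₁ * u₀ ^ 2 + b ^ 2 * (ρ₁ - ρ₀) + p ρ₀ + p ρ₁ - 2 * q₁)
        * (-(b ^ 2 * (ρ₁ - ρ₀)) * (ρ₀ / ρ₁) - p ρ₀ + p ρ₁) > 0) := by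
  have hbpos : 0 < b := ha.trans hab
  have hb2 : b ^ 2 = deriv p ρ₀ + 1 := by
    rw [hb, Real.sq_sqrt (Real.sqrt_pos.mp (hb ▸ hbpos)).le]
  have hδ : ρ₁ - ρ₀ = a * ε / (b - a) := by rw [hρ₁]; ring
  have hρ₀₁ : ρ₀ < ρ₁ := by
    have : 0 < a * ε / (b - a) := div_pos (mul_pos ha hε) (sub_pos.mpr hab)
    linarith
  have h1 : ρ₁ * u₀ ^ 2 + b ^ 2 * (ρ₁ - ρ₀) + p ρ₀ + p ρ₁ - 2 * q₁ < 0 := by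
    rw [hq₁, first_factor_eq_neg]
    linarith
  have h2 : -(b ^ 2 * (ρ₁ - ρ₀)) * (ρ₀ / ρ₁) - p ρ₀ + p ρ₁ < 0 := by
    rw [← hρ₁, ← hδ, ← hb2] at ha2
    exact second_factor_neg_of_slope_lt hρ₀ hρ₀₁ ha2
  refine ⟨h1, h2, ?_, mul_pos_of_neg_of_neg h1 h2⟩
  rw [trace_eq_add_factors u₀ b ρ₀ ρ₁ (p ρ₀) (p ρ₁) q₁ (hρ₀.trans hρ₀₁).ne']
  exact add_neg h1 h2

/-- **Verification of the subsolution conditions in the outer intermediate regions**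
(proof of Lemma 3.5). With `b := √(p'(ρ₀) + 1)`, `ε ∈ (0, ρ₀)`, and `a ∈ (0, b)`
satisfying (a2), for `ρ₁ := ρ₀ + aε/(b-a)` and
`q₁ := ½(ρ₁u₀² + (ρ₁-ρ₀)(b²+1) + p(ρ₀) + p(ρ₁))`, both factors on the left-hand side of
the determinant subsolution condition are negative ((i) and (ii)), and consequently the
trace condition (iii) and the determinant condition (iv) hold. -/
theorem outer_subsolution_conditions_verified
    (p : ℝ → ℝ) (hp : ContDiffOn ℝ 1 p (Set.Ioi 0))
    (hppos : ∀ ρ : ℝ, 0 < ρ → 0 < p ρ) (hp' : ∀ ρ : ℝ, 0 < ρ → 0 < deriv p ρ)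
    (ρ₀ u₀ : ℝ) (hρ₀ : 0 < ρ₀) (hu₀ : u₀ ≠ 0)
    (b : ℝ) (hb : b = Real.sqrt (deriv p ρ₀ + 1))
    (ε : ℝ) (hε : 0 < ε) (hερ₀ : ε < ρ₀)
    (a : ℝ) (ha : 0 < a) (hab : a < b)
    (ha2 : ((p (ρ₀ + a * ε / (b - a)) - p ρ₀) / (a * ε / (b - a)))
          * (1 + (a * ε / (b - a)) / ρ₀)
        < deriv p ρ₀ + 1)
    (ρ₁ : ℝ) (hρ₁ : ρ₁ = ρ₀ + a * ε / (b - a))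
    (q₁ : ℝ) (hq₁ : q₁ = (ρ₁ * u₀ ^ 2 + (ρ₁ - ρ₀) * (b ^ 2 + 1) + p ρ₀ + p ρ₁) / 2) :
    -- (i)
    (ρ₁ * u₀ ^ 2 + b ^ 2 * (ρ₁ - ρ₀) + p ρ₀ + p ρ₁ - 2 * q₁ < 0) ∧
    -- (ii)
    (-(b ^ 2 * (ρ₁ - ρ₀)) * (ρ₀ / ρ₁) - p ρ₀ + p ρ₁ < 0) ∧
    -- (iii)
    (ρ₁ * u₀ ^ 2 + b ^ 2 * (ρ₁ - ρ₀) ^ 2 / ρ₁ + 2 * (p ρ₁ - q₁) < 0) ∧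
    -- (iv)
    ((ρ₁ * u₀ ^ 2 + b ^ 2 * (ρ₁ - ρ₀) + p ρ₀ + p ρ₁ - 2 * q₁)
        * (-(b ^ 2 * (ρ₁ - ρ₀)) * (ρ₀ / ρ₁) - p ρ₀ + p ρ₁) > 0) :=
  outer_subsolution_conditions_verified_general p ρ₀ u₀ hρ₀ b hb ε hε a ha hab ha2 ρ₁ hρ₁ q₁ hq₁
end

section
/- (Nonexistence of admissible fan subsolutions with a three-region partition.) Let ρ₀ > 0, u₀ ≠ 0, and let p(ρ₀) ∈ ℝ. Then there do NOT exist real numbers μ₀ < μ₁, a density ρ₁ > 0, a momentum m₁ ∈ ℝ², real numbers U₁₁, U₁₂ (the entries of a symmetric traceless matrix 𝕌₁), and q₁ ∈ ℝ satisfying simultaneously: the Rankine–Hugoniot conditions across y = μ₀t with left state (ρ₀, (−ρ₀u₀, 0), diag(½ρ₀u₀², −½ρ₀u₀²), ½ρ₀u₀² + p(ρ₀)): μ₀(ρ₀ − ρ₁) = −[m₁]₂, μ₀(−ρ₀u₀ − [m₁]₁) = −U₁₂, μ₀(0 − [m₁]₂) = p(ρ₀) + U₁₁ − q₁; the Rankine–Hugoniot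 conditions across y = μ₁t with right state (ρ₀, (ρ₀u₀, 0), diag(½ρ₀u₀², −½ρ₀u₀²), ½ρ₀u₀² + p(ρ₀)): μ₁(ρ₁ − ρ₀) = [m₁]₂, μ₁([m₁]₁ − ρ₀u₀) = U₁₂, μ₁([m₁]₂ − 0) = −U₁₁ + q₁ − p(ρ₀); and the subsolution conditions: ([m₁]₁² + [m₁]₂²)/ρ₁ + 2(p(ρ₁) − q₁) < 0 and ([m₁]₁²/ρ₁ − U₁₁ + p(ρ₁) − q₁)([m₁]₂²/ρ₁ + U₁₁ + p(ρ₁) − q₁) − ([m₁]₁[m₁]₂/ρ₁ − U₁₂)² > 0. -/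
/-! The two mass conditions give `(μ₁ - μ₀)(ρ₁ - ρ₀) = 0`, hence `ρ₁ = ρ₀` and `[m₁]₂ = 0`.
The second momentum condition across `y = μ₀ t` then makes the `(2,2)` entry of the subsolution
matrix vanish, so its determinant is `-(…)² ≤ 0`. -/

theorem eq_and_eq_zero_of_jumps_of_ne {R : Type*} [CommRing R] [NoZeroDivisors R]
    {μ₀ μ₁ a b m : R} (hμ : μ₀ ≠ μ₁) (h₀ : μ₀ * (a - b) = -m) (h₁ : μ₁ * (b - a) = m) :
    b = a ∧ m = 0 := by
  have hprod : (μ₁ - μ₀) * (b - a) = 0 := by linear_combination h₁ + h₀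
  have hba : b - a = 0 := (mul_eq_zero.1 hprod).resolve_left (sub_ne_zero.2 hμ.symm)
  exact ⟨sub_eq_zero.1 hba, by rw [← h₁, hba, mul_zero]⟩

theorem no_three_region_fan_subsolution_general
    (p : ℝ → ℝ) (ρ₀ u₀ : ℝ) :
    ¬ ∃ (μ₀ μ₁ : ℝ) (ρ₁ : ℝ) (m₁ : ℝ × ℝ) (U₁₁ U₁₂ q₁ : ℝ),
      μ₀ < μ₁ ∧ 0 < ρ₁ ∧
      -- Rankine–Hugoniot conditions across y = μ₀ t (left state
      -- (ρ₀, (-ρ₀u₀, 0), diag(½ρ₀u₀², -½ρ₀u₀²), ½ρ₀u₀² + p(ρ₀)))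
      (μ₀ * (ρ₀ - ρ₁) = 0 - m₁.2) ∧
      (μ₀ * (-(ρ₀ * u₀) - m₁.1) = 0 - U₁₂) ∧
      (μ₀ * (0 - m₁.2) = p ρ₀ + U₁₁ - q₁) ∧
      -- Rankine–Hugoniot conditions across y = μ₁ t (right state
      -- (ρ₀, (ρ₀u₀, 0), diag(½ρ₀u₀², -½ρ₀u₀²), ½ρ₀u₀² + p(ρ₀)))
      (μ₁ * (ρ₁ - ρ₀) = m₁.2 - 0) ∧
      (μ₁ * (m₁.1 - ρ₀ * u₀) = U₁₂ - 0) ∧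
      (μ₁ * (m₁.2 - 0) = -U₁₁ + q₁ - p ρ₀) ∧
      -- subsolution conditions
      ((m₁.1 ^ 2 + m₁.2 ^ 2) / ρ₁ + 2 * (p ρ₁ - q₁) < 0) ∧
      ((m₁.1 ^ 2 / ρ₁ - U₁₁ + p ρ₁ - q₁) * (m₁.2 ^ 2 / ρ₁ + U₁₁ + p ρ₁ - q₁)
          - (m₁.1 * m₁.2 / ρ₁ - U₁₂) ^ 2 > 0) := by
  rintro ⟨μ₀, μ₁, ρ₁, m₁, U₁₁, U₁₂, q₁, hμ, -, hmass₀, -, hmom₀, hmass₁, -, -, -, hdet⟩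
  obtain ⟨rfl, hm₂⟩ := eq_and_eq_zero_of_jumps_of_ne hμ.ne
    (zero_sub m₁.2 ▸ hmass₀) (sub_zero m₁.2 ▸ hmass₁)
  have hentry : m₁.2 ^ 2 / ρ₁ + U₁₁ + p ρ₁ - q₁ = 0 := by
    rw [hm₂, sub_self, mul_zero] at hmom₀
    rw [hm₂, zero_pow two_ne_zero, zero_div, zero_add]
    linarith
  have hdet_nonpos : (m₁.1 ^ 2 / ρ₁ - U₁₁ + p ρ₁ - q₁) * (m₁.2 ^ 2 / ρ₁ + U₁₁ + p ρ₁ - q₁)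
      - (m₁.1 * m₁.2 / ρ₁ - U₁₂) ^ 2 ≤ 0 := by
    rw [hentry, mul_zero, zero_sub]
    exact neg_nonpos.2 (sq_nonneg _)
  exact not_lt.2 hdet_nonpos hdet

/-- **Nonexistence of admissible fan subsolutions with a three-region partition**
(Remark 3.6). For the symmetric contact-discontinuity Riemann data `ρ± = ρ₀`,
`m± = (±ρ₀u₀, 0)`, there is no fan partition of `(0,∞)×ℝ²` into three regions with a single
intermediate state `(ρ₁, m₁, 𝕌₁, q₁)` (the symmetric traceless matrix `𝕌₁` being recorded
by its entries `U₁₁ = [𝕌₁]₁₁, U₁₂ = [𝕌₁]₁₂`) satisfying the Rankine–Hugoniot conditions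
across the two interfaces `y = μ₀ t` and `y = μ₁ t` together with the subsolution
conditions. -/
theorem no_three_region_fan_subsolution
    (p : ℝ → ℝ) (ρ₀ u₀ : ℝ) (hρ₀ : 0 < ρ₀) (hu₀ : u₀ ≠ 0) :
    ¬ ∃ (μ₀ μ₁ : ℝ) (ρ₁ : ℝ) (m₁ : ℝ × ℝ) (U₁₁ U₁₂ q₁ : ℝ),
      μ₀ < μ₁ ∧ 0 < ρ₁ ∧
      -- Rankine–Hugoniot conditions across y = μ₀ t (left state
      -- (ρ₀, (-ρ₀u₀, 0), diag(½ρ₀u₀², -½ρ₀u₀²), ½ρ₀u₀² + p(ρ₀)))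
      (μ₀ * (ρ₀ - ρ₁) = 0 - m₁.2) ∧
      (μ₀ * (-(ρ₀ * u₀) - m₁.1) = 0 - U₁₂) ∧
      (μ₀ * (0 - m₁.2) = p ρ₀ + U₁₁ - q₁) ∧
      -- Rankine–Hugoniot conditions across y = μ₁ t (right state
      -- (ρ₀, (ρ₀u₀, 0), diag(½ρ₀u₀², -½ρ₀u₀²), ½ρ₀u₀² + p(ρ₀)))
      (μ₁ * (ρ₁ - ρ₀) = m₁.2 - 0) ∧
      (μ₁ * (m₁.1 - ρ₀ * u₀) = U₁₂ - 0) ∧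
      (μ₁ * (m₁.2 - 0) = -U₁₁ + q₁ - p ρ₀) ∧
      -- subsolution conditions
      ((m₁.1 ^ 2 + m₁.2 ^ 2) / ρ₁ + 2 * (p ρ₁ - q₁) < 0) ∧
      ((m₁.1 ^ 2 / ρ₁ - U₁₁ + p ρ₁ - q₁) * (m₁.2 ^ 2 / ρ₁ + U₁₁ + p ρ₁ - q₁)
          - (m₁.1 * m₁.2 / ρ₁ - U₁₂) ^ 2 > 0) :=
  no_three_region_fan_subsolution_general p ρ₀ u₀
end
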